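/- arXiv:2304.06878 — 6 statements merged into one kernel-verified Lean document; each statement's English description precedes it below -/
import Mathlib

section
/- The sequence a_n := (∫_0^1 (sin t)^(n−1) dt) / (∫_0^π (sin t)^(n−1) dt) tends to 0 as n → ∞. -/
open Filter

lemma sin_num_nonneg (m : ℕ) : 0 ≤ ∫ t in (0:ℝ)..1, Real.sin t ^ m := by
  apply intervalIntegral.integral_nonneg (by norm_num)
  intro t ht
  exact pow_nonneg (Real.sin_nonneg_of_nonneg_of_le_pi ht.1
    (by linarith [Real.pi_gt_three, ht.2])) m

lemma sin_num_le (m : ℕ) : (∫ t in (0:ℝ)..1, Real.sin t ^ m) ≤ Real.sin 1 ^ m := by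
  have h : (∫ _t in (0:ℝ)..1, Real.sin 1 ^ m) = Real.sin 1 ^ m := by simp
  rw [← h]
  apply intervalIntegral.integral_mono_on (by norm_num)
    ((Real.continuous_sin.pow m).intervalIntegrable 0 1) intervalIntegrable_const
  intro t ht
  have hpi := Real.pi_gt_three
  have h1 : Real.sin t ≤ Real.sin 1 := by
    apply Real.strictMonoOn_sin.monotoneOn ⟨by linarith [ht.1], by linarith [ht.2]⟩
      ⟨by linarith, by linarith⟩ ht.2
  have h0 : 0 ≤ Real.sin t :=
    Real.sin_nonneg_of_nonneg_of_le_pi ht.1 (by linarith [ht.2])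
  exact pow_le_pow_left₀ h0 h1 m

lemma sin_den_ge (m : ℕ) :
    0.4 * Real.sin 1.1 ^ m ≤ ∫ t in (0:ℝ)..Real.pi, Real.sin t ^ m := by
  have hpi := Real.pi_gt_three
  have hint : ∀ a b : ℝ, IntervalIntegrable (fun t => Real.sin t ^ m) MeasureTheory.volume a b :=
    fun a b => (Real.continuous_sin.pow m).intervalIntegrable a b
  have hsplit1 : (∫ t in (0:ℝ)..(1.1:ℝ), Real.sin t ^ m) +
      (∫ t in (1.1:ℝ)..Real.pi, Real.sin t ^ m) = ∫ t in (0:ℝ)..Real.pi, Real.sin t ^ m :=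
    intervalIntegral.integral_add_adjacent_intervals (hint _ _) (hint _ _)
  have hsplit2 : (∫ t in (1.1:ℝ)..(1.5:ℝ), Real.sin t ^ m) +
      (∫ t in (1.5:ℝ)..Real.pi, Real.sin t ^ m) = ∫ t in (1.1:ℝ)..Real.pi, Real.sin t ^ m :=
    intervalIntegral.integral_add_adjacent_intervals (hint _ _) (hint _ _)
  have hnn : ∀ a b : ℝ, 0 ≤ a → a ≤ b → b ≤ Real.pi →
      0 ≤ ∫ t in a..b, Real.sin t ^ m := by
    intro a b ha hab hb
    apply intervalIntegral.integral_nonneg hab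
    intro t ht
    exact pow_nonneg (Real.sin_nonneg_of_nonneg_of_le_pi (le_trans ha ht.1)
      (le_trans ht.2 hb)) m
  have h1 : 0 ≤ ∫ t in (0:ℝ)..(1.1:ℝ), Real.sin t ^ m := hnn 0 1.1 le_rfl (by norm_num) (by linarith)
  have h3 : 0 ≤ ∫ t in (1.5:ℝ)..Real.pi, Real.sin t ^ m :=
    hnn 1.5 Real.pi (by norm_num) (by linarith) le_rfl
  have hmid : 0.4 * Real.sin 1.1 ^ m ≤ ∫ t in (1.1:ℝ)..(1.5:ℝ), Real.sin t ^ m := by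
    have hc : (∫ _t in (1.1:ℝ)..(1.5:ℝ), Real.sin 1.1 ^ m) = 0.4 * Real.sin 1.1 ^ m := by
      simp
      norm_num
    rw [← hc]
    apply intervalIntegral.integral_mono_on (by norm_num) intervalIntegrable_const (hint _ _)
    intro t ht
    have hs : Real.sin 1.1 ≤ Real.sin t := by
      apply Real.strictMonoOn_sin.monotoneOn ⟨by linarith, by linarith⟩
        ⟨by linarith [ht.1], by linarith [ht.2]⟩ ht.1
    exact pow_le_pow_left₀ (Real.sin_nonneg_of_nonneg_of_le_pi (by norm_num) (by linarith)) hs m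
  linarith

lemma sin_one_lt : Real.sin 1 < Real.sin 1.1 := by
  have hpi := Real.pi_gt_three
  exact Real.strictMonoOn_sin ⟨by linarith, by linarith⟩ ⟨by linarith, by linarith⟩ (by norm_num)

lemma sin_oneone_pos : 0 < Real.sin 1.1 := by
  have hpi := Real.pi_gt_three
  exact Real.sin_pos_of_pos_of_lt_pi (by norm_num) (by linarith)

/-- The sequence `a_n = (∫_0^1 sin^(n−1) t dt) / (∫_0^π sin^(n−1) t dt)` tends to `0`
as `n → ∞`. -/
theorem tendsto_ratio_integral_sin_pow :
    Tendsto (fun n : ℕ =>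
        (∫ t in (0:ℝ)..1, Real.sin t ^ (n - 1)) / (∫ t in (0:ℝ)..Real.pi, Real.sin t ^ (n - 1)))
      atTop (nhds 0) := by
  have hs1 : 0 ≤ Real.sin 1 := Real.sin_nonneg_of_nonneg_of_le_pi (by norm_num)
    (by linarith [Real.pi_gt_three])
  have hr1 : 0 ≤ Real.sin 1 / Real.sin 1.1 := div_nonneg hs1 sin_oneone_pos.le
  have hr2 : Real.sin 1 / Real.sin 1.1 < 1 :=
    (div_lt_one sin_oneone_pos).mpr sin_one_lt
  have hbound : Tendsto (fun n : ℕ => (1/0.4 : ℝ) * (Real.sin 1 / Real.sin 1.1) ^ (n - 1))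
      atTop (nhds 0) := by
    have := (tendsto_pow_atTop_nhds_zero_of_lt_one hr1 hr2).comp
      (tendsto_sub_atTop_nat 1)
    have h0 : (1/0.4 : ℝ) * 0 = 0 := by ring
    rw [← h0]
    exact this.const_mul _
  apply squeeze_zero (fun n => ?_) (fun n => ?_) hbound
  · exact div_nonneg (sin_num_nonneg _) (le_trans (le_of_lt (mul_pos (by norm_num) (pow_pos sin_oneone_pos _))) (sin_den_ge (n - 1)))
  · have hden := sin_den_ge (n - 1)
    have hB : (0:ℝ) < 0.4 * Real.sin 1.1 ^ (n - 1) := mul_pos (by norm_num) (pow_pos sin_oneone_pos _)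
    calc (∫ t in (0:ℝ)..1, Real.sin t ^ (n - 1)) / (∫ t in (0:ℝ)..Real.pi, Real.sin t ^ (n - 1))
        ≤ Real.sin 1 ^ (n - 1) / (0.4 * Real.sin 1.1 ^ (n - 1)) :=
          div_le_div₀ (pow_nonneg hs1 _) (sin_num_le _) hB hden
      _ = (1/0.4 : ℝ) * (Real.sin 1 / Real.sin 1.1) ^ (n - 1) := by
          rw [div_pow]; field_simp
end

section
/- Let (F, d_F) be a nonempty finite metric space with N := #F points and ν a Borel probability measure on F. Let ε > 0 and let δ > 0 satisfy δ ≤ ε, δ ≤ 1/2, and δ ≤ d_F(x,x') for all x ≠ x' in F. For each k ≥ 1 let Y_k be a finite metric space with exactly (2N)^k points in which any two distinct points are at distance ε, equipped with the uniform probability measure, and equip X_k := F × Y_k with the sup (ℓ∞) product metric and the product measure ν ⊗ uniform. Then for all integers m > n ≥ 1, every coupling π of the measures of X_m and X_n and every subset S ⊆ X_m × X_n satisfy max{dis S, 1 − π(S)} ≥ δ. In particular □(X_m, X_n) ≥ δ whenever m ≠ n. -/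
open MeasureTheory
open scoped ENNReal

/-- The distortion of `S ⊆ A × B` with respect to given distance functions. -/
noncomputable def disWith {A B : Type*} (dA : A → A → ℝ) (dB : B → B → ℝ)
    (S : Set (A × B)) : ℝ :=
  sSup {r : ℝ | ∃ p ∈ S, ∃ q ∈ S, r = |dA p.1 q.1 - dB p.2 q.2|}

/-- Let `F` be a nonempty finite metric space with `N` points, `ν` a Borel probability
measure on `F`, `ε > 0`, and `δ > 0` with `δ ≤ ε`, `δ ≤ 1/2` and `δ ≤ d_F(x,x')` for all
`x ≠ x'`. Model `Y_k` as `Fin ((2N)^k)` with distance `ε` between distinct points and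
uniform measure, and let `X_k := F × Y_k` carry the `ℓ∞` product metric
`max{d_F, d_{Y_k}}` and measure `ν ⊗ uniform`. Then for all `m > n ≥ 1`, every coupling
`π` of the measures of `X_m`, `X_n` and every set `S ⊆ X_m × X_n` satisfy
`max{dis S, 1 − π(S)} ≥ δ`; in particular `□(X_m, X_n) ≥ δ` for `m ≠ n`. -/
theorem box_lower_bound_discrete_products
    (F : Type*) [Fintype F] [Nonempty F] [MetricSpace F]
    [MeasurableSpace F] [BorelSpace F]
    (ν : Measure F) [IsProbabilityMeasure ν]
    (N : ℕ) (hN : N = Fintype.card F)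
    (ε δ : ℝ) (hε : 0 < ε) (hδ : 0 < δ) (hδε : δ ≤ ε) (hδhalf : δ ≤ 1 / 2)
    (hδd : ∀ x x' : F, x ≠ x' → δ ≤ dist x x')
    (m n : ℕ) (hn : 1 ≤ n) (hmn : n < m)
    (π : Measure ((F × Fin ((2 * N) ^ m)) × (F × Fin ((2 * N) ^ n))))
    [IsProbabilityMeasure π]
    (hπ1 : π.map Prod.fst =
      ν.prod (((Fintype.card (Fin ((2 * N) ^ m)) : ℝ≥0∞))⁻¹ • Measure.count))
    (hπ2 : π.map Prod.snd =
      ν.prod (((Fintype.card (Fin ((2 * N) ^ n)) : ℝ≥0∞))⁻¹ • Measure.count))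
    (S : Set ((F × Fin ((2 * N) ^ m)) × (F × Fin ((2 * N) ^ n)))) :
    δ ≤ max
      (disWith
        (fun p q : F × Fin ((2 * N) ^ m) =>
          max (dist p.1 q.1) (if p.2 = q.2 then 0 else ε))
        (fun p q : F × Fin ((2 * N) ^ n) =>
          max (dist p.1 q.1) (if p.2 = q.2 then 0 else ε)) S)
      (1 - (π S).toReal) := by
  classical
  set dA := fun p q : F × Fin ((2 * N) ^ m) =>
      max (dist p.1 q.1) (if p.2 = q.2 then 0 else ε) with hdA
  set dB := fun p q : F × Fin ((2 * N) ^ n) =>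
      max (dist p.1 q.1) (if p.2 = q.2 then 0 else ε) with hdB
  by_cases hdis : δ ≤ disWith dA dB S
  · exact le_trans hdis (le_max_left _ _)
  push_neg at hdis
  -- basic positivity facts
  have hN1 : 1 ≤ N := by
    rw [hN]; exact Fintype.card_pos
  have h2N : 2 ≤ 2 * N := by omega
  have hpow : 0 < (2 * N) ^ m := pow_pos (by omega) m
  haveI : Nonempty (Fin ((2 * N) ^ m)) := ⟨⟨0, hpow⟩⟩
  -- bounds for distances
  obtain ⟨C, hC⟩ := (Metric.isBounded_iff).1 (Set.finite_univ (α := F)).isBounded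
  set M := max C ε with hM
  have hdAle : ∀ p q, 0 ≤ dA p q ∧ dA p q ≤ M := by
    intro p q
    constructor
    · exact le_trans dist_nonneg (le_max_left _ _)
    · apply max_le
      · exact le_trans (hC (Set.mem_univ _) (Set.mem_univ _)) (le_max_left _ _)
      · split
        · exact le_trans hε.le (le_max_right _ _)
        · exact le_max_right _ _
  have hdBle : ∀ p q, 0 ≤ dB p q ∧ dB p q ≤ M := by
    intro p q
    constructor
    · exact le_trans dist_nonneg (le_max_left _ _)
    · apply max_le
      · exact le_trans (hC (Set.mem_univ _) (Set.mem_univ _)) (le_max_left _ _)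
      · split
        · exact le_trans hε.le (le_max_right _ _)
        · exact le_max_right _ _
  have hbdd : BddAbove {r : ℝ | ∃ p ∈ S, ∃ q ∈ S, r = |dA p.1 q.1 - dB p.2 q.2|} := by
    refine ⟨M, ?_⟩
    rintro r ⟨p, hp, q, hq, rfl⟩
    obtain ⟨h1, h2⟩ := hdAle p.1 q.1
    obtain ⟨h3, h4⟩ := hdBle p.2 q.2
    rw [abs_sub_le_iff]
    constructor <;> linarith
  -- each fiber over X_n contains at most one point
  have hfib : ∀ p p' q, (p, q) ∈ S → (p', q) ∈ S → p = p' := by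
    intro p p' q hpq hp'q
    have hmem : |dA p p' - dB q q| ∈
        {r : ℝ | ∃ p ∈ S, ∃ q ∈ S, r = |dA p.1 q.1 - dB p.2 q.2|} :=
      ⟨(p, q), hpq, (p', q), hp'q, rfl⟩
    have hle : |dA p p' - dB q q| ≤ disWith dA dB S := le_csSup hbdd hmem
    have hBqq : dB q q = 0 := by simp [hdB]
    have hAd : dA p p' < δ := by
      have := (hdAle p p').1
      rw [hBqq, sub_zero, abs_of_nonneg this] at hle
      linarith
    have h1 : p.1 = p'.1 := by
      by_contra hne
      have := hδd p.1 p'.1 hne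
      have h2 : dist p.1 p'.1 ≤ dA p p' := le_max_left _ _
      linarith
    have h2 : p.2 = p'.2 := by
      by_contra hne
      have : ε ≤ dA p p' := by
        have : (if p.2 = p'.2 then (0:ℝ) else ε) = ε := if_neg hne
        rw [← this]
        exact le_max_right _ _
      linarith
    exact Prod.ext h1 h2
  -- define the selection function
  set f : (F × Fin ((2 * N) ^ n)) → (F × Fin ((2 * N) ^ m)) :=
    fun q => if h : ∃ p, (p, q) ∈ S then h.choose else Classical.arbitrary _ with hf
  set g : (F × Fin ((2 * N) ^ n)) → Fin ((2 * N) ^ m) := fun q => (f q).2 with hg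
  have hSsub : S ⊆ Prod.fst ⁻¹' ((Set.univ : Set F) ×ˢ Set.range g) := by
    rintro ⟨p, q⟩ hpq
    have hex : ∃ p', (p', q) ∈ S := ⟨p, hpq⟩
    have hfq : f q = p := by
      rw [hf]
      simp only [dif_pos hex]
      exact hfib _ _ q hex.choose_spec hpq
    refine Set.mem_preimage.2 ⟨Set.mem_univ _, ⟨q, ?_⟩⟩
    rw [hg]
    simp [hfq]
  have hTmeas : MeasurableSet ((Set.univ : Set F) ×ˢ Set.range g) :=
    MeasurableSet.univ.prod (Set.Finite.measurableSet (Set.finite_range g))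
  -- bound the measure of the range
  have hcount : Measure.count (Set.range g) ≤ ((N * (2 * N) ^ n : ℕ) : ℝ≥0∞) := by
    have hrg : Set.range g = ↑(Finset.univ.image g) := by
      simp
    rw [hrg, Measure.count_apply_finset]
    have hcard : (Finset.univ.image g).card ≤ N * (2 * N) ^ n := by
      calc (Finset.univ.image g).card ≤ (Finset.univ : Finset (F × Fin ((2 * N) ^ n))).card :=
            Finset.card_image_le
        _ = Fintype.card F * (2 * N) ^ n := by
            simp [Fintype.card_prod]
        _ = N * (2 * N) ^ n := by rw [hN]
    exact_mod_cast hcard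
  have hπS : π S ≤ 1 / 2 := by
    calc π S ≤ π (Prod.fst ⁻¹' ((Set.univ : Set F) ×ˢ Set.range g)) := measure_mono hSsub
      _ = (π.map Prod.fst) ((Set.univ : Set F) ×ˢ Set.range g) :=
          (Measure.map_apply measurable_fst hTmeas).symm
      _ = (ν.prod (((Fintype.card (Fin ((2 * N) ^ m)) : ℝ≥0∞))⁻¹ • Measure.count))
            ((Set.univ : Set F) ×ˢ Set.range g) := by rw [hπ1]
      _ = ν Set.univ * ((((2 * N) ^ m : ℕ) : ℝ≥0∞)⁻¹ • Measure.count) (Set.range g) := by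
          rw [Measure.prod_prod]
          simp [Fintype.card_fin]
      _ = (((2 * N) ^ m : ℕ) : ℝ≥0∞)⁻¹ * Measure.count (Set.range g) := by
          simp [measure_univ]
      _ ≤ (((2 * N) ^ m : ℕ) : ℝ≥0∞)⁻¹ * ((N * (2 * N) ^ n : ℕ) : ℝ≥0∞) := by
          exact mul_le_mul_right hcount _
      _ ≤ 1 / 2 := by
          rw [← ENNReal.div_eq_inv_mul]
          rw [ENNReal.div_le_iff (by exact_mod_cast hpow.ne') (ENNReal.natCast_ne_top _)]
          have hnat : (N * (2 * N) ^ n) * 2 ≤ (2 * N) ^ m := by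
            calc (N * (2 * N) ^ n) * 2 = (2 * N) ^ (n + 1) := by ring
              _ ≤ (2 * N) ^ m := Nat.pow_le_pow_right (by omega) (by omega)
          calc ((N * (2 * N) ^ n : ℕ) : ℝ≥0∞) ≤ (((2 * N) ^ m : ℕ) : ℝ≥0∞) / 2 := by
                rw [ENNReal.le_div_iff_mul_le (Or.inl (by norm_num)) (Or.inl (by norm_num))]
                exact_mod_cast hnat
            _ = 1 / 2 * (((2 * N) ^ m : ℕ) : ℝ≥0∞) := by
                rw [ENNReal.div_eq_inv_mul, one_div]
  have htr : (π S).toReal ≤ 1 / 2 := by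
    have := ENNReal.toReal_mono (by norm_num) hπS
    simpa using this
  have : δ ≤ 1 - (π S).toReal := by linarith
  exact le_trans this (le_max_right _ _)
end

section
/- Assume moreover that r > 0, that π is concentrated on {(x,y) ∈ Z × Z : ‖x − y‖ ≤ r}, and that π(Z × Z) ≥ 1 − r. Define the Borel measure π_0 := (pr0, M)_*π + (1/2)·ι_*(μ0 − (pr0)_*π) on Z × Z, where ι(x) := (x,x). Then: (i) (pr0)_*π_0 ≤ μ0; (ii) (pr1)_*π_0 ≤ μ_{1/2}; (iii) π_0 is concentrated on {(x,y) ∈ Z × Z : ‖x − y‖ ≤ r/2}; and (iv) π_0(Z × Z) ≥ 1 − r/2. That is, π_0 is an (r/2)-subtransport plan between μ0 and μ_{1/2} with deficiency at most r/2. -/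
open MeasureTheory
open scoped ENNReal

/-- The midpoint map `M(x,y) = (x+y)/2` on a real normed space. -/
noncomputable def midMap {Z : Type*} [NormedAddCommGroup Z] [NormedSpace ℝ Z]
    (p : Z × Z) : Z := (2⁻¹ : ℝ) • (p.1 + p.2)

/-- The measure `μ_{1/2} := M_*π + (1/2)(μ0 − (pr0)_*π) + (1/2)(μ1 − (pr1)_*π)`. -/
noncomputable def muHalf {Z : Type*} [NormedAddCommGroup Z] [NormedSpace ℝ Z]
    [MeasurableSpace Z] (μ0 μ1 : Measure Z) (π : Measure (Z × Z)) : Measure Z :=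
  π.map midMap + (2⁻¹ : ℝ≥0∞) • (μ0 - π.map Prod.fst)
    + (2⁻¹ : ℝ≥0∞) • (μ1 - π.map Prod.snd)

/-- The measure `π_0 := (pr0, M)_*π + (1/2)·ι_*(μ0 − (pr0)_*π)` where `ι(x) = (x,x)`. -/
noncomputable def piZero {Z : Type*} [NormedAddCommGroup Z] [NormedSpace ℝ Z]
    [MeasurableSpace Z] (μ0 : Measure Z) (π : Measure (Z × Z)) : Measure (Z × Z) :=
  π.map (fun p => (p.1, midMap p))
    + (2⁻¹ : ℝ≥0∞) • (μ0 - π.map Prod.fst).map (fun x => (x, x))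

/-!
The plan `π_0` moves the mass of `π` from `(x, y)` to `(x, (x+y)/2)`, which halves the
displacement, and adds half of the mass of `μ0` left over by `π` on the diagonal, where the
displacement is `0`. Its marginals are `(pr0)_*π + ½(μ0 − (pr0)_*π) ≤ μ0` and
`M_*π + ½(μ0 − (pr0)_*π) ≤ μ_{1/2}`, and its mass is `(1 + π(Z × Z))/2 ≥ 1 − r/2`.
-/

namespace MeasureTheory.Measure

variable {α : Type*} [MeasurableSpace α]

theorem add_smul_sub_le {μ ν : Measure α} [IsFiniteMeasure ν] (hνμ : ν ≤ μ) {c : ℝ≥0∞}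
    (hc : c ≤ 1) : ν + c • (μ - ν) ≤ μ :=
  calc ν + c • (μ - ν) ≤ ν + (μ - ν) :=
        add_le_add le_rfl fun s => mul_le_of_le_one_left zero_le hc
    _ = μ := by rw [add_comm, sub_add_cancel_of_le hνμ]

end MeasureTheory.Measure

theorem ENNReal.toReal_add_half_one_sub {a : ℝ≥0∞} (ha : a ≤ 1) :
    (a + 2⁻¹ * (1 - a)).toReal = (1 + a.toReal) / 2 := by
  have ha_top : a ≠ ⊤ := ne_top_of_le_ne_top one_ne_top ha
  rw [ENNReal.toReal_add ha_top (by finiteness), ENNReal.toReal_mul,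
    ENNReal.toReal_sub_of_le ha one_ne_top]
  simp only [ENNReal.toReal_inv, ENNReal.toReal_ofNat, ENNReal.toReal_one]
  ring

section Midpoint

variable {Z : Type*} [NormedAddCommGroup Z] [NormedSpace ℝ Z]

theorem norm_fst_sub_midMap (p : Z × Z) : ‖p.1 - midMap p‖ = ‖p.1 - p.2‖ / 2 := by
  have : p.1 - midMap p = (2⁻¹ : ℝ) • (p.1 - p.2) := by
    simp only [midMap]
    module
  rw [this, norm_smul, Real.norm_of_nonneg (by norm_num)]
  ring

variable [MeasurableSpace Z] [BorelSpace Z] [SecondCountableTopology Z]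

theorem measurable_midMap : Measurable (midMap : Z × Z → Z) :=
  (continuous_const.smul (continuous_fst.add continuous_snd)).measurable

theorem measurable_fst_midMap : Measurable (fun p : Z × Z => (p.1, midMap p)) :=
  measurable_fst.prodMk measurable_midMap

omit [NormedSpace ℝ Z] in
theorem measurableSet_lt_norm_sub (r : ℝ) : MeasurableSet {p : Z × Z | r < ‖p.1 - p.2‖} :=
  (isOpen_lt continuous_const (continuous_fst.sub continuous_snd).norm).measurableSet

variable (μ0 : Measure Z) (π : Measure (Z × Z))

theorem map_fst_piZero :
    (piZero μ0 π).map Prod.fst = π.map Prod.fst + (2⁻¹ : ℝ≥0∞) • (μ0 - π.map Prod.fst) := by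
  have hdiag : Measurable fun x : Z => (x, x) := measurable_diag
  rw [piZero, Measure.map_add _ _ measurable_fst, Measure.map_smul,
    Measure.map_map measurable_fst measurable_fst_midMap,
    Measure.map_map measurable_fst hdiag]
  exact congrArg₂ _ rfl (congrArg _ Measure.map_id)

theorem map_snd_piZero :
    (piZero μ0 π).map Prod.snd = π.map midMap + (2⁻¹ : ℝ≥0∞) • (μ0 - π.map Prod.fst) := by
  have hdiag : Measurable fun x : Z => (x, x) := measurable_diag
  rw [piZero, Measure.map_add _ _ measurable_snd, Measure.map_smul,
    Measure.map_map measurable_snd measurable_fst_midMap,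
    Measure.map_map measurable_snd hdiag]
  exact congrArg₂ _ rfl (congrArg _ Measure.map_id)

theorem piZero_lt_norm_sub_half_eq_zero {r : ℝ} (hr : 0 ≤ r)
    (hπ : π {p : Z × Z | r < ‖p.1 - p.2‖} = 0) :
    piZero μ0 π {p : Z × Z | r / 2 < ‖p.1 - p.2‖} = 0 := by
  have hmid : π ((fun p : Z × Z => (p.1, midMap p)) ⁻¹' {p | r / 2 < ‖p.1 - p.2‖}) = 0 := by
    refine measure_mono_null (fun p hp => ?_) hπ
    simp only [Set.mem_preimage, Set.mem_ofPred_eq, norm_fst_sub_midMap] at hp ⊢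
    linarith
  have hdiag : Measurable fun x : Z => (x, x) := measurable_diag
  have hdiag_null : (fun x : Z => (x, x)) ⁻¹' {p : Z × Z | r / 2 < ‖p.1 - p.2‖} = ∅ := by
    ext x
    simp only [Set.mem_preimage, Set.mem_ofPred_eq, sub_self, norm_zero, Set.mem_empty_iff_false,
      iff_false, not_lt]
    linarith
  rw [piZero, Measure.add_apply, Measure.smul_apply,
    Measure.map_apply measurable_fst_midMap (measurableSet_lt_norm_sub _),
    Measure.map_apply hdiag (measurableSet_lt_norm_sub _), hmid, hdiag_null]
  simp

theorem piZero_apply_univ [IsFiniteMeasure μ0] (hπ0 : π.map Prod.fst ≤ μ0) :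
    piZero μ0 π Set.univ = π Set.univ + 2⁻¹ * (μ0 Set.univ - π Set.univ) := by
  have : IsFiniteMeasure (π.map Prod.fst) := isFiniteMeasure_of_le μ0 hπ0
  have hdiag : Measurable fun x : Z => (x, x) := measurable_diag
  rw [piZero, Measure.add_apply, Measure.smul_apply,
    Measure.map_apply measurable_fst_midMap MeasurableSet.univ,
    Measure.map_apply hdiag MeasurableSet.univ, Set.preimage_univ, Set.preimage_univ,
    Measure.sub_apply MeasurableSet.univ hπ0, smul_eq_mul,
    Measure.map_apply measurable_fst MeasurableSet.univ, Set.preimage_univ]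

end Midpoint

theorem piZero_subtransport_general
    (Z : Type*) [NormedAddCommGroup Z] [NormedSpace ℝ Z]
    [SecondCountableTopology Z] [MeasurableSpace Z] [BorelSpace Z]
    (μ0 μ1 : Measure Z) [IsProbabilityMeasure μ0]
    (π : Measure (Z × Z))
    (hπ0 : π.map Prod.fst ≤ μ0)
    (r : ℝ) (hr : 0 < r)
    (hconc : π {p : Z × Z | r < ‖p.1 - p.2‖} = 0)
    (hdef : 1 - r ≤ (π Set.univ).toReal) :
    (piZero μ0 π).map Prod.fst ≤ μ0 ∧
    (piZero μ0 π).map Prod.snd ≤ muHalf μ0 μ1 π ∧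
    piZero μ0 π {p : Z × Z | r / 2 < ‖p.1 - p.2‖} = 0 ∧
    1 - r / 2 ≤ (piZero μ0 π Set.univ).toReal := by
  have : IsFiniteMeasure (π.map Prod.fst) := isFiniteMeasure_of_le μ0 hπ0
  have hπ_le_one : π Set.univ ≤ 1 := by
    simpa [Measure.map_apply measurable_fst MeasurableSet.univ] using hπ0 Set.univ
  refine ⟨?_, ?_, piZero_lt_norm_sub_half_eq_zero μ0 π hr.le hconc, ?_⟩
  · rw [map_fst_piZero]
    exact Measure.add_smul_sub_le hπ0 (by norm_num)
  · rw [map_snd_piZero, muHalf]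
    exact Measure.le_add_right le_rfl
  · rw [piZero_apply_univ μ0 π hπ0, measure_univ (μ := μ0),
      ENNReal.toReal_add_half_one_sub hπ_le_one]
    linarith

/-- Let `Z` be a separable real Banach space, `μ0`, `μ1` Borel probability measures on
`Z`, and `π` a Borel measure on `Z × Z` with `(pr0)_*π ≤ μ0`, `(pr1)_*π ≤ μ1`. Assume
`r > 0`, `π` is concentrated on `{‖x − y‖ ≤ r}` and `π(Z × Z) ≥ 1 − r`. Then `π_0` is an
`(r/2)`-subtransport plan between `μ0` and `μ_{1/2}` with deficiency at most `r/2`: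
(i) `(pr0)_*π_0 ≤ μ0`; (ii) `(pr1)_*π_0 ≤ μ_{1/2}`; (iii) `π_0` is concentrated on
`{‖x − y‖ ≤ r/2}`; (iv) `π_0(Z × Z) ≥ 1 − r/2`. -/
theorem piZero_subtransport
    (Z : Type*) [NormedAddCommGroup Z] [NormedSpace ℝ Z] [CompleteSpace Z]
    [SecondCountableTopology Z] [MeasurableSpace Z] [BorelSpace Z]
    (μ0 μ1 : Measure Z) [IsProbabilityMeasure μ0] [IsProbabilityMeasure μ1]
    (π : Measure (Z × Z))
    (hπ0 : π.map Prod.fst ≤ μ0) (hπ1 : π.map Prod.snd ≤ μ1)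
    (r : ℝ) (hr : 0 < r)
    (hconc : π {p : Z × Z | r < ‖p.1 - p.2‖} = 0)
    (hdef : 1 - r ≤ (π Set.univ).toReal) :
    (piZero μ0 π).map Prod.fst ≤ μ0 ∧
    (piZero μ0 π).map Prod.snd ≤ muHalf μ0 μ1 π ∧
    piZero μ0 π {p : Z × Z | r / 2 < ‖p.1 - p.2‖} = 0 ∧
    1 - r / 2 ≤ (piZero μ0 π Set.univ).toReal :=
  piZero_subtransport_general Z μ0 μ1 π hπ0 r hr hconc hdef
end

section
/- Assume moreover that r > 0, that π is concentrated on {(x,y) ∈ Z × Z : ‖x − y‖ ≤ r}, and that π(Z × Z) ≥ 1 − r. Then μ_{1/2} is a Borel probability measure on Z, and the Prokhorov distances satisfy d_P(μ0, μ_{1/2}) ≤ r/2 and d_P(μ1, μ_{1/2}) ≤ r/2. -/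
open MeasureTheory
open scoped ENNReal

/-! Since `μ_{1/2}` is a probability measure, it suffices to show `μ_i B ≤ μ_{1/2}(B_ε) + ε`
for `ε > r/2`. Write `μ_i = (pr_i)_*π + ρ_i`. Moving each pair `(x, y)` from its `i`-th
coordinate to its midpoint costs at most `r/2`, so `(pr_i)_*π B ≤ M_*π (B_ε)`. Of the remainder
`ρ_i B`, one half is dominated by the half of `ρ_i` kept in `μ_{1/2}`, and the other half by
`ρ_i(Z)/2 = (1 - π(Z × Z))/2 ≤ r/2`. -/

section Coupling

open Metric Set

variable {α X : Type*} [MeasurableSpace α] [MeasurableSpace X]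

lemma measure_sub_map_univ {π : Measure α} {f : α → X} (hf : Measurable f)
    {μ : Measure X} [IsProbabilityMeasure μ] (hfμ : π.map f ≤ μ) :
    (μ - π.map f) univ = 1 - π univ := by
  have : IsFiniteMeasure (π.map f) := isFiniteMeasure_of_le μ hfμ
  rw [Measure.sub_apply MeasurableSet.univ hfμ, measure_univ,
    Measure.map_apply hf MeasurableSet.univ, preimage_univ]

variable [PseudoMetricSpace X]

lemma map_apply_le_map_thickening_of_ae_dist_le {π : Measure α} {f g : α → X}
    (hf : Measurable f) (hg : Measurable g) {δ ε : ℝ}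
    (hfg : ∀ᵐ p ∂π, dist (f p) (g p) ≤ δ) (hδε : δ < ε) {B : Set X} (hB : MeasurableSet B) :
    π.map f B ≤ π.map g (thickening ε B) := by
  rw [Measure.map_apply hf hB]
  refine le_trans (measure_mono_ae ?_) (Measure.le_map_apply hg.aemeasurable _)
  filter_upwards [hfg] with p hp hpB
  exact mem_thickening_iff.2 ⟨f p, hpB, by rw [dist_comm]; linarith⟩

lemma measure_le_add_half_sub_thickening {μ ν m : Measure X} [IsFiniteMeasure ν]
    (hνμ : ν ≤ μ) {ε : ℝ} (hε : 0 < ε) {B : Set X} (hνm : ν B ≤ m (thickening ε B))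
    (hrem : (μ - ν) univ ≤ ENNReal.ofReal (2 * ε)) :
    μ B ≤ (m + (2⁻¹ : ℝ≥0∞) • (μ - ν)) (thickening ε B) + ENNReal.ofReal ε := by
  set T := thickening ε B
  have half_rem : 2⁻¹ * (μ - ν) univ ≤ ENNReal.ofReal ε := by
    rw [ENNReal.ofReal_mul zero_le_two, ENNReal.ofReal_ofNat] at hrem
    calc 2⁻¹ * (μ - ν) univ ≤ 2⁻¹ * (2 * ENNReal.ofReal ε) := by gcongr
      _ = ENNReal.ofReal ε := ENNReal.inv_mul_cancel_left two_ne_zero ENNReal.ofNat_ne_top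
  calc μ B = ν B + (2⁻¹ * (μ - ν) B + 2⁻¹ * (μ - ν) B) := by
        rw [← add_mul, ENNReal.inv_two_add_inv_two, one_mul, add_comm,
          ← Measure.add_apply, Measure.sub_add_cancel_of_le hνμ]
    _ ≤ m T + (2⁻¹ * (μ - ν) T + 2⁻¹ * (μ - ν) univ) := by
        gcongr
        · exact self_subset_thickening hε B
        · exact subset_univ B
    _ ≤ m T + 2⁻¹ * (μ - ν) T + ENNReal.ofReal ε := by
        rw [← add_assoc]; gcongr
    _ = (m + (2⁻¹ : ℝ≥0∞) • (μ - ν)) T + ENNReal.ofReal ε := rfl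

lemma levyProkhorovDist_le_of_map_le_of_ae_dist_le [OpensMeasurableSpace X]
    {π : Measure α} {f g : α → X} (hf : Measurable f) (hg : Measurable g)
    (μ μ' : Measure X) [IsProbabilityMeasure μ] [IsProbabilityMeasure μ']
    (hfμ : π.map f ≤ μ) {δ : ℝ} (hδ : 0 ≤ δ) (hfg : ∀ᵐ p ∂π, dist (f p) (g p) ≤ δ)
    (hrem : (μ - π.map f) univ ≤ ENNReal.ofReal (2 * δ))
    (hμ' : π.map g + (2⁻¹ : ℝ≥0∞) • (μ - π.map f) ≤ μ') :
    levyProkhorovDist μ μ' ≤ δ := by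
  have : IsFiniteMeasure (π.map f) := isFiniteMeasure_of_le μ hfμ
  refine levyProkhorovDist_le_of_forall_le μ μ' hδ fun ε B hδε hB => ?_
  calc μ B ≤ (π.map g + (2⁻¹ : ℝ≥0∞) • (μ - π.map f)) (thickening ε B) + ENNReal.ofReal ε :=
        measure_le_add_half_sub_thickening hfμ (hδ.trans_lt hδε)
          (map_apply_le_map_thickening_of_ae_dist_le hf hg hfg hδε hB)
          (hrem.trans (ENNReal.ofReal_le_ofReal (by linarith)))
    _ ≤ μ' (thickening ε B) + ENNReal.ofReal ε := by gcongr

end Coupling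

section Midpoint

variable {Z : Type*} [NormedAddCommGroup Z] [NormedSpace ℝ Z]

lemma measurable_midMap_s8 [MeasurableSpace Z] [BorelSpace Z] [SecondCountableTopology Z] :
    Measurable (midMap (Z := Z)) :=
  ((continuous_fst.add continuous_snd).const_smul _).measurable

lemma dist_fst_midMap (p : Z × Z) : dist p.1 (midMap p) = ‖p.1 - p.2‖ / 2 := by
  rw [dist_eq_norm, show p.1 - midMap p = (2⁻¹ : ℝ) • (p.1 - p.2) by
    simp only [midMap]; module, norm_smul]
  norm_num
  ring

lemma dist_snd_midMap (p : Z × Z) : dist p.2 (midMap p) = ‖p.1 - p.2‖ / 2 := by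
  rw [dist_eq_norm, show p.2 - midMap p = (2⁻¹ : ℝ) • (p.2 - p.1) by
    simp only [midMap]; module, norm_smul, norm_sub_rev p.2 p.1]
  norm_num
  ring

end Midpoint

theorem muHalf_prokhorov_close_general
    (Z : Type*) [NormedAddCommGroup Z] [NormedSpace ℝ Z]
    [SecondCountableTopology Z] [MeasurableSpace Z] [BorelSpace Z]
    (μ0 μ1 : Measure Z) [IsProbabilityMeasure μ0] [IsProbabilityMeasure μ1]
    (π : Measure (Z × Z))
    (hπ0 : π.map Prod.fst ≤ μ0) (hπ1 : π.map Prod.snd ≤ μ1)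
    (r : ℝ) (hr : 0 < r)
    (hconc : π {p : Z × Z | r < ‖p.1 - p.2‖} = 0)
    (hdef : 1 - r ≤ (π Set.univ).toReal) :
    IsProbabilityMeasure (muHalf μ0 μ1 π) ∧
    levyProkhorovDist μ0 (muHalf μ0 μ1 π) ≤ r / 2 ∧
    levyProkhorovDist μ1 (muHalf μ0 μ1 π) ≤ r / 2 := by
  have hmass0 := measure_sub_map_univ measurable_fst hπ0
  have hmass1 := measure_sub_map_univ measurable_snd hπ1
  have hπ_le_one : π Set.univ ≤ 1 := by
    simpa [Measure.map_apply measurable_fst MeasurableSet.univ] using hπ0 Set.univ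
  have hdefect : 1 - π Set.univ ≤ ENNReal.ofReal (2 * (r / 2)) := by
    rw [mul_div_cancel₀ r two_ne_zero, ENNReal.le_ofReal_iff_toReal_le (by simp) hr.le,
      ENNReal.toReal_sub_of_le hπ_le_one ENNReal.one_ne_top, ENNReal.toReal_one]
    linarith
  have hnear : ∀ᵐ p ∂π, ‖p.1 - p.2‖ / 2 ≤ r / 2 := by
    filter_upwards [measure_eq_zero_iff_ae_notMem.1 hconc] with p hp
    exact div_le_div_of_nonneg_right (not_lt.1 hp) zero_le_two
  have hprob : IsProbabilityMeasure (muHalf μ0 μ1 π) := ⟨by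
    simp only [muHalf, Measure.add_apply, Measure.smul_apply, smul_eq_mul, hmass0, hmass1,
      Measure.map_apply measurable_midMap_s8 MeasurableSet.univ, Set.preimage_univ]
    rw [add_assoc, ← add_mul, ENNReal.inv_two_add_inv_two, one_mul,
      add_tsub_cancel_of_le hπ_le_one]⟩
  refine ⟨hprob, ?_, ?_⟩
  · exact levyProkhorovDist_le_of_map_le_of_ae_dist_le measurable_fst measurable_midMap_s8 μ0 _
      hπ0 (by positivity) (by simpa only [dist_fst_midMap] using hnear) (hmass0 ▸ hdefect)
      (Measure.le_add_right le_rfl)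
  · refine levyProkhorovDist_le_of_map_le_of_ae_dist_le measurable_snd measurable_midMap_s8 μ1 _
      hπ1 (by positivity) (by simpa only [dist_snd_midMap] using hnear) (hmass1 ▸ hdefect) ?_
    rw [muHalf, add_right_comm]
    exact Measure.le_add_right le_rfl

/-- Let `Z` be a separable real Banach space, `μ0`, `μ1` Borel probability measures on
`Z`, and `π` a Borel measure on `Z × Z` with `(pr0)_*π ≤ μ0`, `(pr1)_*π ≤ μ1`. Assume
`r > 0`, `π` is concentrated on `{‖x − y‖ ≤ r}`, and `π(Z × Z) ≥ 1 − r`. Then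
`μ_{1/2}` is a probability measure, and the (Lévy–)Prokhorov distances satisfy
`d_P(μ0, μ_{1/2}) ≤ r/2` and `d_P(μ1, μ_{1/2}) ≤ r/2`. -/
theorem muHalf_prokhorov_close
    (Z : Type*) [NormedAddCommGroup Z] [NormedSpace ℝ Z] [CompleteSpace Z]
    [SecondCountableTopology Z] [MeasurableSpace Z] [BorelSpace Z]
    (μ0 μ1 : Measure Z) [IsProbabilityMeasure μ0] [IsProbabilityMeasure μ1]
    (π : Measure (Z × Z))
    (hπ0 : π.map Prod.fst ≤ μ0) (hπ1 : π.map Prod.snd ≤ μ1)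
    (r : ℝ) (hr : 0 < r)
    (hconc : π {p : Z × Z | r < ‖p.1 - p.2‖} = 0)
    (hdef : 1 - r ≤ (π Set.univ).toReal) :
    IsProbabilityMeasure (muHalf μ0 μ1 π) ∧
    levyProkhorovDist μ0 (muHalf μ0 μ1 π) ≤ r / 2 ∧
    levyProkhorovDist μ1 (muHalf μ0 μ1 π) ≤ r / 2 :=
  muHalf_prokhorov_close_general Z μ0 μ1 π hπ0 hπ1 r hr hconc hdef
end

section
/- For all Borel sets A0, A1 ⊆ Z and every Borel set B ⊆ Z containing M(A0 × A1) = {(x+y)/2 : x ∈ A0, y ∈ A1}, one has μ_{1/2}(A0 ∪ B ∪ A1) ≥ μ0(A0) + μ1(A1) − 1. -/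
open MeasureTheory
open scoped ENNReal

/-! Split `μ_{1/2}(S)`, `S = A0 ∪ B ∪ A1`, into its three parts. The pushforward part is at least
`π(A0 × A1)` because `M(A0 × A1) ⊆ S`, and the residual parts are at least half the unmatched masses
`μᵢ(Aᵢ) - (prᵢ)_*π(Aᵢ)`. Each unmatched mass is at most `1 - π(Z × Z)`, while inclusion–exclusion
gives `(pr0)_*π(A0) + (pr1)_*π(A1) ≤ π(A0 × A1) + π(Z × Z)`; summing these yields the bound. -/

open Set

namespace MeasureTheory.Measure

variable {α β : Type*} [MeasurableSpace α] [MeasurableSpace β]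

theorem measureReal_sub_apply {μ ν : Measure α} [IsFiniteMeasure μ] (h : ν ≤ μ) {s : Set α}
    (hs : MeasurableSet s) : (μ - ν).real s = μ.real s - ν.real s := by
  have : IsFiniteMeasure ν := isFiniteMeasure_of_le μ h
  rw [measureReal_def, sub_apply hs h, ENNReal.toReal_sub_of_le (h s) (measure_ne_top μ s)]
  rfl

theorem measureReal_sub_measureReal_le_univ_of_le {μ ν : Measure α} [IsFiniteMeasure μ]
    (h : ν ≤ μ) {s : Set α} (hs : MeasurableSet s) :
    μ.real s - ν.real s ≤ μ.real univ - ν.real univ := by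
  have : IsFiniteMeasure ν := isFiniteMeasure_of_le μ h
  have hc : ν.real sᶜ ≤ μ.real sᶜ := ENNReal.toReal_mono (measure_ne_top μ _) (h _)
  rw [measureReal_compl hs, measureReal_compl hs] at hc
  linarith

theorem measureReal_map_fst_add_map_snd_le (π : Measure (α × β)) [IsFiniteMeasure π]
    {s : Set α} {t : Set β} (hs : MeasurableSet s) (ht : MeasurableSet t) :
    (π.map Prod.fst).real s + (π.map Prod.snd).real t ≤ π.real (s ×ˢ t) + π.real univ := by
  rw [map_measureReal_apply measurable_fst hs, map_measureReal_apply measurable_snd ht,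
    ← measureReal_union_add_inter (measurable_snd ht), add_comm]
  exact add_le_add (measureReal_mono fun _ ↦ id) (measureReal_mono (subset_univ _))

theorem isFiniteMeasure_of_map_fst_le (π : Measure (α × β)) {μ : Measure α} [IsFiniteMeasure μ]
    (h : π.map Prod.fst ≤ μ) : IsFiniteMeasure π := by
  have : IsFiniteMeasure (π.map Prod.fst) := isFiniteMeasure_of_le μ h
  constructor
  simpa [map_apply measurable_fst MeasurableSet.univ] using measure_lt_top (π.map Prod.fst) univ

end MeasureTheory.Measure

section

variable {Z : Type*} [NormedAddCommGroup Z] [NormedSpace ℝ Z]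

theorem continuous_midMap : Continuous (midMap (Z := Z)) :=
  (continuous_fst.add continuous_snd).const_smul _

variable [MeasurableSpace Z] {μ0 μ1 : Measure Z} {π : Measure (Z × Z)}

theorem muHalf_real_apply [IsFiniteMeasure μ0] [IsFiniteMeasure μ1] [IsFiniteMeasure π]
    (S : Set Z) :
    (muHalf μ0 μ1 π).real S = (π.map midMap).real S + 2⁻¹ * (μ0 - π.map Prod.fst).real S
      + 2⁻¹ * (μ1 - π.map Prod.snd).real S := by
  simp [muHalf, measureReal_def, ENNReal.toReal_add, ENNReal.mul_eq_top, measure_ne_top]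

theorem le_muHalf_real_of_subset [SecondCountableTopology Z] [BorelSpace Z]
    [IsFiniteMeasure μ0] [IsFiniteMeasure μ1] [IsFiniteMeasure π]
    (hπ0 : π.map Prod.fst ≤ μ0) (hπ1 : π.map Prod.snd ≤ μ1)
    {A0 A1 S : Set Z} (hA0 : MeasurableSet A0) (hA1 : MeasurableSet A1)
    (hS0 : A0 ⊆ S) (hS1 : A1 ⊆ S) (hMS : midMap '' (A0 ×ˢ A1) ⊆ S) :
    π.real (A0 ×ˢ A1) + 2⁻¹ * (μ0.real A0 - (π.map Prod.fst).real A0)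
      + 2⁻¹ * (μ1.real A1 - (π.map Prod.snd).real A1) ≤ (muHalf μ0 μ1 π).real S := by
  have hmid : π.real (A0 ×ˢ A1) ≤ (π.map midMap).real S :=
    ENNReal.toReal_mono (measure_ne_top _ _) <| (measure_mono (image_subset_iff.1 hMS)).trans <|
      Measure.le_map_apply continuous_midMap.measurable.aemeasurable S
  rw [muHalf_real_apply, ← Measure.measureReal_sub_apply hπ0 hA0,
    ← Measure.measureReal_sub_apply hπ1 hA1]
  gcongr <;> exact measure_ne_top _ _

end

theorem muHalf_union_lower_bound_general
    (Z : Type*) [NormedAddCommGroup Z] [NormedSpace ℝ Z]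
    [SecondCountableTopology Z] [MeasurableSpace Z] [BorelSpace Z]
    (μ0 μ1 : Measure Z) [IsProbabilityMeasure μ0] [IsProbabilityMeasure μ1]
    (π : Measure (Z × Z))
    (hπ0 : π.map Prod.fst ≤ μ0) (hπ1 : π.map Prod.snd ≤ μ1)
    (A0 A1 B : Set Z) (hA0 : MeasurableSet A0) (hA1 : MeasurableSet A1)
    (hMB : midMap '' (A0 ×ˢ A1) ⊆ B) :
    (μ0 A0).toReal + (μ1 A1).toReal - 1 ≤ (muHalf μ0 μ1 π (A0 ∪ B ∪ A1)).toReal := by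
  have : IsFiniteMeasure π := Measure.isFiniteMeasure_of_map_fst_le π hπ0
  have hS := le_muHalf_real_of_subset hπ0 hπ1 hA0 hA1 (S := A0 ∪ B ∪ A1)
    (subset_union_left.trans subset_union_left) subset_union_right
    (hMB.trans (subset_union_right.trans subset_union_left))
  have hmarg := Measure.measureReal_map_fst_add_map_snd_le π hA0 hA1
  have hdef0 := Measure.measureReal_sub_measureReal_le_univ_of_le hπ0 hA0
  have hdef1 := Measure.measureReal_sub_measureReal_le_univ_of_le hπ1 hA1
  simp only [probReal_univ, map_measureReal_apply measurable_fst MeasurableSet.univ,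
    map_measureReal_apply measurable_snd MeasurableSet.univ, preimage_univ] at hdef0 hdef1
  change μ0.real A0 + μ1.real A1 - 1 ≤ (muHalf μ0 μ1 π).real (A0 ∪ B ∪ A1)
  linarith

/-- Let `Z` be a separable real Banach space, `μ0`, `μ1` Borel probability measures on
`Z`, and `π` a Borel measure on `Z × Z` with `(pr0)_*π ≤ μ0`, `(pr1)_*π ≤ μ1`. For all
Borel sets `A0, A1 ⊆ Z` and every Borel set `B ⊆ Z` containing
`M(A0 × A1) = {(x+y)/2 : x ∈ A0, y ∈ A1}`, the measure `μ_{1/2}` satisfies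
`μ_{1/2}(A0 ∪ B ∪ A1) ≥ μ0(A0) + μ1(A1) − 1`. -/
theorem muHalf_union_lower_bound
    (Z : Type*) [NormedAddCommGroup Z] [NormedSpace ℝ Z] [CompleteSpace Z]
    [SecondCountableTopology Z] [MeasurableSpace Z] [BorelSpace Z]
    (μ0 μ1 : Measure Z) [IsProbabilityMeasure μ0] [IsProbabilityMeasure μ1]
    (π : Measure (Z × Z))
    (hπ0 : π.map Prod.fst ≤ μ0) (hπ1 : π.map Prod.snd ≤ μ1)
    (A0 A1 B : Set Z) (hA0 : MeasurableSet A0) (hA1 : MeasurableSet A1)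
    (hB : MeasurableSet B) (hMB : midMap '' (A0 ×ˢ A1) ⊆ B) :
    (μ0 A0).toReal + (μ1 A1).toReal - 1 ≤ (muHalf μ0 μ1 π (A0 ∪ B ∪ A1)).toReal :=
  muHalf_union_lower_bound_general Z μ0 μ1 π hπ0 hπ1 A0 A1 B hA0 hA1 hMB
end

section
/- Let Z be a real normed vector space, ε ≥ 0, let Z0, Z1 ⊆ Z be nonempty bounded subsets, and let x̄, ȳ ∈ Z satisfy dist(x̄, Z0) ≤ 2ε and dist(ȳ, Z1) ≤ 2ε. Then diam(Z0 ∪ M(Z0 × Z1) ∪ Z1) ≤ (3/2)·diam Z0 + (3/2)·diam Z1 + ‖x̄ − ȳ‖ + 4ε, where M(Z0 × Z1) := {(z0 + z1)/2 : z0 ∈ Z0, z1 ∈ Z1}. -/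
open Metric

/-- Let `Z` be a real normed vector space, `ε ≥ 0`, `Z0, Z1 ⊆ Z` nonempty bounded
subsets, and `x̄, ȳ ∈ Z` with `dist(x̄, Z0) ≤ 2ε` and `dist(ȳ, Z1) ≤ 2ε`. Then
`diam(Z0 ∪ M(Z0 × Z1) ∪ Z1) ≤ (3/2)·diam Z0 + (3/2)·diam Z1 + ‖x̄ − ȳ‖ + 4ε`,
where `M(Z0 × Z1) = {(z0 + z1)/2 : z0 ∈ Z0, z1 ∈ Z1}`. -/
theorem diam_union_midpoints_le
    (Z : Type*) [NormedAddCommGroup Z] [NormedSpace ℝ Z]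
    (ε : ℝ) (hε : 0 ≤ ε) (Z0 Z1 : Set Z) (h0 : Z0.Nonempty) (h1 : Z1.Nonempty)
    (hb0 : Bornology.IsBounded Z0) (hb1 : Bornology.IsBounded Z1)
    (xb yb : Z) (hx : infDist xb Z0 ≤ 2 * ε) (hy : infDist yb Z1 ≤ 2 * ε) :
    diam (Z0 ∪ ((fun p : Z × Z => (2⁻¹ : ℝ) • (p.1 + p.2)) '' (Z0 ×ˢ Z1)) ∪ Z1) ≤
      3 / 2 * diam Z0 + 3 / 2 * diam Z1 + ‖xb - yb‖ + 4 * ε := by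
  set d0 := diam Z0 with hd0
  set d1 := diam Z1 with hd1
  have hd0n : 0 ≤ d0 := diam_nonneg
  have hd1n : 0 ≤ d1 := diam_nonneg
  have hnn : 0 ≤ 3 / 2 * d0 + 3 / 2 * d1 + ‖xb - yb‖ + 4 * ε := by positivity
  -- key cross estimate
  have cross : ∀ a ∈ Z0, ∀ b ∈ Z1, dist a b ≤ d0 + d1 + ‖xb - yb‖ + 4 * ε := by
    intro a ha b hb
    have h1 : dist a xb ≤ infDist xb Z0 + d0 := by
      rw [dist_comm]; exact dist_le_infDist_add_diam hb0 ha
    have h2 : dist yb b ≤ infDist yb Z1 + d1 := dist_le_infDist_add_diam hb1 hb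
    calc dist a b ≤ dist a xb + dist xb yb + dist yb b := dist_triangle4 a xb yb b
      _ ≤ (infDist xb Z0 + d0) + ‖xb - yb‖ + (infDist yb Z1 + d1) := by
          rw [show ‖xb - yb‖ = dist xb yb from (dist_eq_norm _ _).symm]; gcongr
      _ ≤ (2 * ε + d0) + ‖xb - yb‖ + (2 * ε + d1) := by gcongr
      _ = d0 + d1 + ‖xb - yb‖ + 4 * ε := by ring
  have mid_dist : ∀ x y a b : Z,
      dist ((2⁻¹ : ℝ) • (x + y)) ((2⁻¹ : ℝ) • (a + b)) ≤ 2⁻¹ * (dist x a + dist y b) := by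
    intro x y a b
    rw [dist_smul₀]
    have : dist (x + y) (a + b) ≤ dist x a + dist y b := dist_add_add_le x y a b
    calc ‖(2⁻¹ : ℝ)‖ * dist (x + y) (a + b) ≤ ‖(2⁻¹ : ℝ)‖ * (dist x a + dist y b) := by
          gcongr
      _ = 2⁻¹ * (dist x a + dist y b) := by norm_num
  have self_mid : ∀ z : Z, z = (2⁻¹ : ℝ) • (z + z) := by
    intro z
    rw [smul_add]
    module
  -- main bound for any two points in the union
  apply diam_le_of_forall_dist_le hnn
  rintro x hxm y hym
  have key : ∀ x ∈ Z0 ∪ ((fun p : Z × Z => (2⁻¹ : ℝ) • (p.1 + p.2)) '' (Z0 ×ˢ Z1)) ∪ Z1,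
      ∀ y ∈ Z0 ∪ ((fun p : Z × Z => (2⁻¹ : ℝ) • (p.1 + p.2)) '' (Z0 ×ˢ Z1)) ∪ Z1,
      dist x y ≤ 3 / 2 * d0 + 3 / 2 * d1 + ‖xb - yb‖ + 4 * ε → True := fun _ _ _ _ _ => trivial
  clear key
  have hxnorm : 0 ≤ ‖xb - yb‖ := norm_nonneg _
  rcases hxm with (hx0 | ⟨⟨a, b⟩, ⟨ha, hb⟩, rfl⟩) | hx1 <;>
    rcases hym with (hy0 | ⟨⟨a', b'⟩, ⟨ha', hb'⟩, rfl⟩) | hy1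
  · calc dist x y ≤ d0 := dist_le_diam_of_mem hb0 hx0 hy0
      _ ≤ _ := by linarith
  · -- x ∈ Z0, y midpoint
    have h := mid_dist x x a' b'
    rw [← self_mid x] at h
    have h1 : dist x a' ≤ d0 := dist_le_diam_of_mem hb0 hx0 ha'
    have h2 : dist x b' ≤ d0 + d1 + ‖xb - yb‖ + 4 * ε := cross x hx0 b' hb'
    calc dist x _ ≤ 2⁻¹ * (dist x a' + dist x b') := h
      _ ≤ _ := by linarith
  · -- x ∈ Z0, y ∈ Z1
    have := cross x hx0 y hy1
    linarith
  · -- x midpoint, y ∈ Z0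
    have h := mid_dist a b y y
    rw [← self_mid y] at h
    have h1 : dist a y ≤ d0 := dist_le_diam_of_mem hb0 ha hy0
    have h2 : dist b y ≤ d0 + d1 + ‖xb - yb‖ + 4 * ε := by
      rw [dist_comm]; exact cross y hy0 b hb
    calc dist _ y ≤ 2⁻¹ * (dist a y + dist b y) := h
      _ ≤ _ := by linarith
  · -- both midpoints
    have h := mid_dist a b a' b'
    have h1 : dist a a' ≤ d0 := dist_le_diam_of_mem hb0 ha ha'
    have h2 : dist b b' ≤ d1 := dist_le_diam_of_mem hb1 hb hb'
    calc dist _ _ ≤ 2⁻¹ * (dist a a' + dist b b') := h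
      _ ≤ _ := by linarith
  · -- x midpoint, y ∈ Z1
    have h := mid_dist a b y y
    rw [← self_mid y] at h
    have h1 : dist a y ≤ d0 + d1 + ‖xb - yb‖ + 4 * ε := cross a ha y hy1
    have h2 : dist b y ≤ d1 := dist_le_diam_of_mem hb1 hb hy1
    calc dist _ y ≤ 2⁻¹ * (dist a y + dist b y) := h
      _ ≤ _ := by linarith
  · -- x ∈ Z1, y ∈ Z0
    have := cross y hy0 x hx1
    rw [dist_comm]
    linarith
  · -- x ∈ Z1, y midpoint
    have h := mid_dist x x a' b'
    rw [← self_mid x] at h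
    have h1 : dist x a' ≤ d0 + d1 + ‖xb - yb‖ + 4 * ε := by
      rw [dist_comm]; exact cross a' ha' x hx1
    have h2 : dist x b' ≤ d1 := dist_le_diam_of_mem hb1 hx1 hb'
    calc dist x _ ≤ 2⁻¹ * (dist x a' + dist x b') := h
      _ ≤ _ := by linarith
  · calc dist x y ≤ d1 := dist_le_diam_of_mem hb1 hx1 hy1
      _ ≤ _ := by linarith
end
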